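/- Unbiasedness of the weighted difference in means for the SATT: if (i) E[Y_{0i} | X_i = x] = φ(x)ᵀθ for all x, and (ii) the weights satisfy exact feature balance (1/N1)∑_{D_i=1} φ(X_i) = ∑_{D_i=0} w_i φ(X_i), then E[DIM_w − SATT] = 0, where DIM_w = (1/N1)∑_{D_i=1} Y_i − ∑_{D_i=0} w_i Y_i. -/

import Mathlib

open Finset MeasureTheory Matrix

/-!
Under the outcome model the treated units contribute `Y1` to both the estimator and the SATT,
so `DIM_w − SATT` is the weighted imbalance of the control outcomes `Y0 = φ(X)ᵀθ + ε`
between treated and controls. Exact feature balance cancels the systematic part `φ(X)ᵀθ`,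
leaving a fixed linear combination of the errors `εᵢ`, each of mean zero.
-/

section Balance

variable {ι κ : Type*} [Fintype κ]

theorem mul_sum_dotProduct_eq_of_balance (s t : Finset ι) (c : ℝ) (w : ι → ℝ)
    (f : ι → κ → ℝ) (θ : κ → ℝ) (hbal : ∀ q, c * ∑ i ∈ s, f i q = ∑ i ∈ t, w i * f i q) :
    c * ∑ i ∈ s, f i ⬝ᵥ θ = ∑ i ∈ t, w i * (f i ⬝ᵥ θ) := by
  have hvec : c • ∑ i ∈ s, f i = ∑ i ∈ t, w i • f i := by
    ext q
    simpa only [Pi.smul_apply, Finset.sum_apply, smul_eq_mul] using hbal q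
  simpa only [smul_dotProduct, sum_dotProduct, smul_eq_mul] using congrArg (· ⬝ᵥ θ) hvec

end Balance

section Estimator

variable {ι : Type*} [Fintype ι] (D : ι → Bool)

theorem dim_sub_satt_eq_imbalance (c : ℝ) (w Y0 Y1 Y : ι → ℝ)
    (hY : ∀ i, Y i = if D i then Y1 i else Y0 i) :
    (c * ∑ i ∈ univ.filter (fun i => D i = true), Y i
        - ∑ i ∈ univ.filter (fun i => D i = false), w i * Y i)
      - c * ∑ i ∈ univ.filter (fun i => D i = true), (Y1 i - Y0 i)
      = c * ∑ i ∈ univ.filter (fun i => D i = true), Y0 i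
        - ∑ i ∈ univ.filter (fun i => D i = false), w i * Y0 i := by
  have htreated : ∑ i ∈ univ.filter (fun i => D i = true), Y i
      = ∑ i ∈ univ.filter (fun i => D i = true), Y1 i :=
    sum_congr rfl fun i hi => by simp [hY, (mem_filter.mp hi).2]
  have hcontrol : ∑ i ∈ univ.filter (fun i => D i = false), w i * Y i
      = ∑ i ∈ univ.filter (fun i => D i = false), w i * Y0 i :=
    sum_congr rfl fun i hi => by simp [hY, (mem_filter.mp hi).2]
  rw [htreated, hcontrol, sum_sub_distrib]
  ring

end Estimator

theorem integral_sum_mul_eq_zero {ι Ω : Type*} [MeasurableSpace Ω] (μ : Measure Ω)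
    (s : Finset ι) (a : ι → ℝ) (ε : ι → Ω → ℝ) (hint : ∀ i, Integrable (ε i) μ)
    (hε : ∀ i, ∫ ω, ε i ω ∂μ = 0) :
    ∫ ω, ∑ i ∈ s, a i * ε i ω ∂μ = 0 := by
  rw [integral_finsetSum _ fun i _ => (hint i).const_mul (a i)]
  simp [integral_const_mul, hε]

theorem weighted_dim_unbiased_for_satt_general {N P Q : ℕ} {Ω : Type*} [MeasurableSpace Ω]
    (μ : Measure Ω)
    (D : Fin N → Bool) (X : Fin N → (Fin P → ℝ))
    (φ : (Fin P → ℝ) → (Fin Q → ℝ)) (θ : Fin Q → ℝ)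
    (ε : Fin N → Ω → ℝ) (hint : ∀ i, Integrable (ε i) μ)
    (hε : ∀ i, ∫ ω, ε i ω ∂μ = 0)
    (Y0 Y1 Y : Fin N → Ω → ℝ)
    (hY0 : ∀ i ω, Y0 i ω = φ (X i) ⬝ᵥ θ + ε i ω)
    (hY : ∀ i ω, Y i ω = if D i then Y1 i ω else Y0 i ω)
    (w : Fin N → ℝ)
    (N1 : ℕ)
    (hbal : ∀ q, (1 / (N1 : ℝ)) * ∑ i ∈ univ.filter (fun i => D i = true), φ (X i) q
        = ∑ i ∈ univ.filter (fun i => D i = false), w i * φ (X i) q) :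
    ∫ ω, (((1 / (N1 : ℝ)) * ∑ i ∈ univ.filter (fun i => D i = true), Y i ω
            - ∑ i ∈ univ.filter (fun i => D i = false), w i * Y i ω)
          - (1 / (N1 : ℝ)) * ∑ i ∈ univ.filter (fun i => D i = true), (Y1 i ω - Y0 i ω))
        ∂μ = 0 := by
  set T := univ.filter (fun i => D i = true)
  set C := univ.filter (fun i => D i = false)
  have hsystematic := mul_sum_dotProduct_eq_of_balance T C _ w (fun i => φ (X i)) θ hbal
  have hnoise : ∀ ω, ((1 / (N1 : ℝ)) * ∑ i ∈ T, Y i ω - ∑ i ∈ C, w i * Y i ω)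
        - (1 / (N1 : ℝ)) * ∑ i ∈ T, (Y1 i ω - Y0 i ω)
      = ∑ i ∈ T, (1 / (N1 : ℝ)) * ε i ω - ∑ i ∈ C, w i * ε i ω := by
    intro ω
    rw [dim_sub_satt_eq_imbalance D _ w (Y0 · ω) (Y1 · ω) (Y · ω) (hY · ω)]
    simp only [hY0, mul_add, sum_add_distrib, ← mul_sum]
    linear_combination hsystematic
  simp_rw [hnoise]
  rw [integral_sub (integrable_finsetSum _ fun i _ => (hint i).const_mul _)
      (integrable_finsetSum _ fun i _ => (hint i).const_mul _),
    integral_sum_mul_eq_zero μ T _ ε hint hε, integral_sum_mul_eq_zero μ C w ε hint hε, sub_zero]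

/-- Unbiasedness of the weighted difference in means for the SATT: if
E[Y0|X=x] = φ(x)ᵀθ (i.e. Y0ᵢ = φ(Xᵢ)ᵀθ + εᵢ with E[εᵢ|Xᵢ]=0) and the weights achieve
exact feature balance on φ, then E[DIM_w − SATT] = 0. -/
theorem weighted_dim_unbiased_for_satt {N P Q : ℕ} {Ω : Type*} [MeasurableSpace Ω]
    (μ : Measure Ω) [IsProbabilityMeasure μ]
    (D : Fin N → Bool) (X : Fin N → (Fin P → ℝ))
    (φ : (Fin P → ℝ) → (Fin Q → ℝ)) (θ : Fin Q → ℝ)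
    (ε : Fin N → Ω → ℝ) (hint : ∀ i, Integrable (ε i) μ)
    (hε : ∀ i, ∫ ω, ε i ω ∂μ = 0)
    (Y0 Y1 Y : Fin N → Ω → ℝ)
    (hY0 : ∀ i ω, Y0 i ω = φ (X i) ⬝ᵥ θ + ε i ω)
    (hY : ∀ i ω, Y i ω = if D i then Y1 i ω else Y0 i ω)
    (w : Fin N → ℝ) (hw : ∀ i, 0 ≤ w i)
    (hw1 : ∑ i ∈ univ.filter (fun i => D i = false), w i = 1)
    (N1 : ℕ) (hN1 : N1 = (univ.filter fun i => D i = true).card) (hN1pos : 0 < N1)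
    (hbal : ∀ q, (1 / (N1 : ℝ)) * ∑ i ∈ univ.filter (fun i => D i = true), φ (X i) q
        = ∑ i ∈ univ.filter (fun i => D i = false), w i * φ (X i) q) :
    ∫ ω, (((1 / (N1 : ℝ)) * ∑ i ∈ univ.filter (fun i => D i = true), Y i ω
            - ∑ i ∈ univ.filter (fun i => D i = false), w i * Y i ω)
          - (1 / (N1 : ℝ)) * ∑ i ∈ univ.filter (fun i => D i = true), (Y1 i ω - Y0 i ω))
        ∂μ = 0 :=
  weighted_dim_unbiased_for_satt_general μ D X φ θ ε hint hε Y0 Y1 Y hY0 hY w N1 hbal
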